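/- arXiv:1812.00966 — 2 statements merged into one kernel-verified Lean document; each statement's English description precedes it below -/
import Mathlib

section
/- Consider the (1+1) EA with one-bit prior noise probability p ≤ 1/2 on LeadingOnes with n ≥ 2, and let P(x → y) denote the probability that the algorithm transitions from current search point x to current search point y in one generation. Then for all x, y ∈ {0,1}^n with LO(x) < LO(y), one has P(x → y) ≥ P(y → x). -/
open Finset ENNReal

/-- A search point: a bit string of length `n`. -/
abbrev Point (n : ℕ) := Fin n → Bool

/-- The LeadingOnes fitness: the length of the longest all-ones prefix. -/
def LO {n : ℕ} (x : Point n) : ℕ :=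
  (Finset.univ.filter fun i : Fin n => ∀ j : Fin n, j ≤ i → x j = true).card

/-- The all-ones string, the unique global optimum of LeadingOnes. -/
def allOnes (n : ℕ) : Point n := fun _ => true

/-- Probability that standard bit mutation (flip each bit independently with
probability `1/n`) turns `x` into `y`. -/
noncomputable def mutProb (n : ℕ) (x y : Point n) : ℝ :=
  (1 / n) ^ hammingDist x y * (1 - 1 / n) ^ (n - hammingDist x y)

/-- Probability that one-bit prior noise with probability `p` turns `x` into `u`:
with probability `1 - p` no noise occurs, otherwise one uniformly random bit flips. -/
noncomputable def oneBitNoise (n : ℕ) (p : ℝ) (x u : Point n) : ℝ :=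
  (if u = x then 1 - p else 0) + (if hammingDist x u = 1 then p / n else 0)

/-- Probability that offspring `y` is accepted against parent `x`, i.e. that the
noisy fitness of `y` is at least the noisy fitness of `x` (noise applied
independently to parent and offspring). -/
noncomputable def accProb (n : ℕ) (noise : Point n → Point n → ℝ)
    (f : Point n → ℝ) (x y : Point n) : ℝ :=
  ∑ u : Point n, ∑ v : Point n,
    noise x u * noise y v * (if f u ≤ f v then 1 else 0)

/-- One-generation transition probability of a (1+1)-type algorithm with mutation
kernel `mutK`, prior-noise kernel `noise` and fitness `f`: mutation creates an
offspring, which replaces the parent iff its noisy fitness is at least the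
parent's noisy fitness. -/
noncomputable def step (n : ℕ) (mutK noise : Point n → Point n → ℝ)
    (f : Point n → ℝ) (x z : Point n) : ℝ :=
  mutK x z * accProb n noise f x z
    + (if z = x then ∑ y : Point n, mutK x y * (1 - accProb n noise f x y) else 0)

/-- One-generation transition probability of the (1+1) EA with one-bit prior
noise probability `p` on LeadingOnes. -/
noncomputable def stepEA (n : ℕ) (p : ℝ) : Point n → Point n → ℝ :=
  step n (mutProb n) (oneBitNoise n p) fun x => (LO x : ℝ)

/-- Probability that a Markov chain with transition matrix `P` started in `x`
does not visit `opt` within the first `t` generations (time `0` included). -/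
noncomputable def survive (n : ℕ) (P : Point n → Point n → ℝ) (opt : Point n) :
    ℕ → Point n → ℝ
  | 0, x => if x = opt then 0 else 1
  | t + 1, x => if x = opt then 0 else ∑ y : Point n, P x y * survive n P opt t y

/-- Expected optimisation time, measured in fitness evaluations
(`evalsPerGen` evaluations per generation), of a Markov chain with transition
matrix `P` started from a uniformly random search point, until it first hits
`opt`; computed as `evalsPerGen · Σ_t P(T > t)`. -/
noncomputable def expectedTime (n : ℕ) (P : Point n → Point n → ℝ)
    (opt : Point n) (evalsPerGen : ℕ) : ℝ≥0∞ :=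
  (evalsPerGen : ℝ≥0∞) * ∑' t : ℕ, ENNReal.ofReal
    ((Fintype.card (Point n) : ℝ)⁻¹ * ∑ x : Point n, survive n P opt t x)

/-- Expected optimisation time (number of fitness evaluations, two per
generation) of the (1+1) EA with one-bit prior noise probability `p` on
LeadingOnes with problem size `n`, from a uniformly random initial search point. -/
noncomputable def EAtime (n : ℕ) (p : ℝ) : ℝ≥0∞ :=
  expectedTime n (stepEA n p) (allOnes n) 2

/-!
Write the noisy fitness of a point as a mixture of "no noise" (weight `1 - p`) and "bit `i`
flipped" (weight `p / n` each), and let `k = LO x < LO y`. Flipping a bit `i < k` gives both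
points fitness `i`; flipping bit `k` gives `y` fitness `k` and `x` a fitness above `k`; every other
outcome gives `x` fitness exactly `k` and `y` a fitness above `k`. Comparing the two noisy
fitnesses symmetrically, the shared low outcomes cancel and what remains is at least
`(1 - p)² - p / n`, which is nonnegative for `p ≤ 1/2` and `n ≥ 2`.
-/

section WeightedComparison

variable {ι α : Type*} [LinearOrder α]

noncomputable def leSign (x y : α) : ℝ := (if x ≤ y then 1 else 0) - (if y ≤ x then 1 else 0)

/-- `u` marks the middle class `a = k < b` and `v` the exceptional index (`b = k ≤ a`): two middle
indices gain `2`, each exceptional index loses at most `1`, and the low class `b = a < k` cancels. -/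
lemma two_mul_sub_sub_le_leSign_add_leSign {k ai bi aj bj : α} {ui vi uj vj : ℝ}
    (hi : (bi = k ∧ k ≤ ai ∧ ui = 0 ∧ vi = 1) ∨ (bi = ai ∧ ai < k ∧ ui = 0 ∧ vi = 0) ∨
      (ai = k ∧ k < bi ∧ ui = 1 ∧ vi = 0))
    (hj : (bj = k ∧ k ≤ aj ∧ uj = 0 ∧ vj = 1) ∨ (bj = aj ∧ aj < k ∧ uj = 0 ∧ vj = 0) ∨
      (aj = k ∧ k < bj ∧ uj = 1 ∧ vj = 0)) :
    2 * ui * uj - vi - vj ≤ leSign ai bj + leSign aj bi := by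
  rcases hi with ⟨rfl, hai, rfl, rfl⟩ | ⟨rfl, hai, rfl, rfl⟩ | ⟨rfl, hbi, rfl, rfl⟩ <;>
    rcases hj with ⟨rfl, haj, rfl, rfl⟩ | ⟨rfl, haj, rfl, rfl⟩ | ⟨rfl, hbj, rfl, rfl⟩ <;>
    simp only [leSign] <;> split_ifs <;> norm_num <;> order

variable [Fintype ι]

/-- The probability that `a i ≤ b j` for independent indices `i`, `j` drawn with weights `w`. -/
noncomputable def leMass (w : ι → ℝ) (a b : ι → α) : ℝ :=
  ∑ i, ∑ j, w i * w j * if a i ≤ b j then 1 else 0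

lemma sum_sum_mul_leSign_add_leSign (w : ι → ℝ) (a b : ι → α) :
    ∑ i, ∑ j, w i * w j * (leSign (a i) (b j) + leSign (a j) (b i)) =
      2 * (leMass w a b - leMass w b a) := by
  have hswap : ∀ c d : ι → α, ∑ i, ∑ j, w i * w j * (if c j ≤ d i then (1 : ℝ) else 0) =
      leMass w c d := fun c d => by
    rw [sum_comm]
    exact sum_congr rfl fun i _ => sum_congr rfl fun j _ => by ring
  simp only [leSign, mul_add, mul_sub, sum_add_distrib, sum_sub_distrib, hswap]
  unfold leMass
  ring

lemma sum_sum_mul_two_mul_sub_sub (w u v : ι → ℝ) :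
    ∑ i, ∑ j, w i * w j * (2 * u i * u j - v i - v j) =
      2 * ((∑ i, w i * u i) ^ 2 - (∑ i, w i * v i) * ∑ i, w i) := by
  have : ∀ i j, w i * w j * (2 * u i * u j - v i - v j) =
      2 * (w i * u i) * (w j * u j) - (w i * v i) * w j - w i * (w j * v j) := fun _ _ => by ring
  simp only [this, sum_sub_distrib, ← mul_sum, ← sum_mul]
  ring

theorem leMass_swap_le [DecidableEq ι] {w : ι → ℝ} (hw : ∀ i, 0 ≤ w i)
    {a b : ι → α} {k : α} {s e : ι} (hs : k ≤ a s) (hbs : b s = k)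
    (hclass : ∀ i, i ≠ s → (b i = a i ∧ a i < k) ∨ (a i = k ∧ k < b i))
    (he : e ≠ s) (hae : a e = k) (hwe : w s * ∑ i, w i ≤ w e ^ 2) :
    leMass w b a ≤ leMass w a b := by
  set u : ι → ℝ := fun i => if i ≠ s ∧ a i = k then 1 else 0
  set v : ι → ℝ := fun i => if i = s then 1 else 0
  have hprofile : ∀ i, (b i = k ∧ k ≤ a i ∧ u i = 0 ∧ v i = 1) ∨
      (b i = a i ∧ a i < k ∧ u i = 0 ∧ v i = 0) ∨ (a i = k ∧ k < b i ∧ u i = 1 ∧ v i = 0) := by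
    intro i
    by_cases hi : i = s
    · subst hi
      exact .inl ⟨hbs, hs, by simp [u], by simp [v]⟩
    · rcases hclass i hi with ⟨hb, ha⟩ | ⟨ha, hb⟩
      · exact .inr (.inl ⟨hb, ha, by simp [u, ha.ne], by simp [v, hi]⟩)
      · exact .inr (.inr ⟨ha, hb, by simp [u, hi, ha], by simp [v, hi]⟩)
  have hv : ∑ i, w i * v i = w s := by simp [v]
  have hU : w e ≤ ∑ i, w i * u i := by
    have : w e * u e = w e := by simp [u, he, hae]
    exact this ▸ single_le_sum (f := fun i => w i * u i)
      (fun i _ => mul_nonneg (hw i) (by simp only [u]; split_ifs <;> norm_num)) (mem_univ e)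
  have hgain := sum_le_sum fun i (_ : i ∈ univ) => sum_le_sum fun j (_ : j ∈ univ) =>
    mul_le_mul_of_nonneg_left (two_mul_sub_sub_le_leSign_add_leSign (hprofile i) (hprofile j))
      (mul_nonneg (hw i) (hw j))
  rw [sum_sum_mul_two_mul_sub_sub, hv, sum_sum_mul_leSign_add_leSign] at hgain
  nlinarith [hw e, pow_le_pow_left₀ (hw e) hU 2]

end WeightedComparison

section LeadingOnes

variable {n : ℕ}

def flipBit (x : Point n) (i : Fin n) : Point n := Function.update x i (!x i)

@[simp] lemma flipBit_apply_self (x : Point n) (i : Fin n) : flipBit x i i = !x i :=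
  Function.update_self ..

lemma flipBit_apply_of_ne (x : Point n) {i j : Fin n} (h : j ≠ i) : flipBit x i j = x j :=
  Function.update_of_ne h ..

lemma flipBit_injective (x : Point n) : Function.Injective (flipBit x) := by
  intro i j hij
  by_contra hne
  have := congrFun hij i
  rw [flipBit_apply_self, flipBit_apply_of_ne x hne] at this
  cases h : x i <;> simp_all

lemma hammingDist_eq_one_iff {x y : Point n} : hammingDist x y = 1 ↔ ∃ i, y = flipBit x i := by
  simp only [hammingDist, card_eq_one, Finset.ext_iff, funext_iff]
  refine exists_congr fun i => forall_congr' fun j => ?_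
  by_cases hj : j = i
  · subst hj
    cases hx : x j <;> cases hy : y j <;> simp [hx, hy]
  · simp [hj, flipBit_apply_of_ne x hj, eq_comm]

lemma LO_le (z : Point n) : LO z ≤ n :=
  (card_filter_le _ _).trans_eq (card_fin n)

lemma lt_LO_iff {z : Point n} {i : Fin n} : (i : ℕ) < LO z ↔ ∀ j ≤ i, z j = true := by
  constructor
  · intro h j hj
    by_contra hzj
    have : LO z ≤ j := by
      refine (card_le_card fun a ha => ?_).trans_eq (Fin.card_Iio j)
      simp only [mem_filter, mem_univ, true_and] at ha
      exact mem_Iio.2 (lt_of_not_ge fun hja => hzj (ha j hja))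
    exact absurd (h.trans_le this) (not_lt.2 (Fin.le_def.1 hj))
  · intro h
    refine Nat.lt_of_succ_le ((Fin.card_Iic i).symm.trans_le (card_le_card fun a ha => ?_))
    simp only [mem_filter, mem_univ, true_and]
    exact fun j hj => h j (hj.trans (mem_Iic.1 ha))

lemma apply_eq_true_of_lt_LO {z : Point n} {i : Fin n} (h : (i : ℕ) < LO z) : z i = true :=
  lt_LO_iff.1 h i le_rfl

lemma apply_LO_eq_false {z : Point n} (h : LO z < n) : z ⟨LO z, h⟩ = false := by
  by_contra hz
  refine lt_irrefl (LO z) (lt_LO_iff (i := ⟨LO z, h⟩).2 fun j hj => ?_)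
  rcases hj.lt_or_eq with hj | rfl
  · exact apply_eq_true_of_lt_LO hj
  · simpa using hz

lemma LO_eq_of_apply {z : Point n} {i : Fin n} (hlt : ∀ j < i, z j = true) (hi : z i = false) :
    LO z = i := by
  suffices (univ.filter fun a : Fin n => ∀ j ≤ a, z j = true) = Iio i by rw [LO, this, Fin.card_Iio]
  ext a
  simp only [mem_filter, mem_univ, true_and, mem_Iio]
  refine ⟨fun ha => lt_of_not_ge fun hia => ?_, fun ha j hj => hlt j (hj.trans_lt ha)⟩
  simp [ha i hia] at hi

lemma LO_flipBit_of_lt {z : Point n} {i : Fin n} (h : (i : ℕ) < LO z) :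
    LO (flipBit z i) = i := by
  refine LO_eq_of_apply (fun j hj => ?_) (by simp [apply_eq_true_of_lt_LO h])
  rw [flipBit_apply_of_ne z hj.ne]
  exact apply_eq_true_of_lt_LO ((Fin.lt_def.1 hj).trans h)

lemma LO_flipBit_of_gt {z : Point n} {i : Fin n} (h : LO z < i) :
    LO (flipBit z i) = LO z := by
  have hn : LO z < n := h.trans i.isLt
  have hne : (⟨LO z, hn⟩ : Fin n) ≠ i := Fin.ne_of_val_ne h.ne
  refine LO_eq_of_apply (i := ⟨LO z, hn⟩) (fun j hj => ?_) ?_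
  · rw [flipBit_apply_of_ne z (hj.trans_le (Fin.le_def.2 h.le)).ne]
    exact apply_eq_true_of_lt_LO hj
  · rw [flipBit_apply_of_ne z hne]
    exact apply_LO_eq_false hn

lemma LO_lt_LO_flipBit {z : Point n} {i : Fin n} (h : (i : ℕ) = LO z) :
    LO z < LO (flipBit z i) := by
  obtain ⟨i, hi⟩ := i
  obtain rfl : i = LO z := h
  refine lt_LO_iff (i := ⟨LO z, hi⟩).2 fun j hj => ?_
  rcases hj.lt_or_eq with hj | rfl
  · rw [flipBit_apply_of_ne _ hj.ne]
    exact apply_eq_true_of_lt_LO hj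
  · simp [apply_LO_eq_false]

lemma min_le_LO_flipBit (z : Point n) (i : Fin n) : min (i : ℕ) (LO z) ≤ LO (flipBit z i) := by
  rcases lt_trichotomy (i : ℕ) (LO z) with h | h | h
  · exact (LO_flipBit_of_lt h).symm ▸ min_le_left _ _
  · exact (min_le_right _ _).trans (LO_lt_LO_flipBit h).le
  · exact (LO_flipBit_of_gt h).symm ▸ min_le_right _ _

/-- One-bit prior noise as a finite mixture indexed by `Option (Fin n)`: `none` leaves the
point unchanged, `some i` flips bit `i`. -/
noncomputable def noiseWeight (n : ℕ) (p : ℝ) : Option (Fin n) → ℝ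
  | none => 1 - p
  | some _ => p / n

def noisyPoint (x : Point n) : Option (Fin n) → Point n
  | none => x
  | some i => flipBit x i

lemma sum_noiseWeight (hn : n ≠ 0) (p : ℝ) : ∑ o, noiseWeight n p o = 1 := by
  simp only [noiseWeight, Fintype.sum_option, sum_const, card_univ, Fintype.card_fin,
    nsmul_eq_mul]
  field_simp
  ring

lemma sum_oneBitNoise_mul (p : ℝ) (x : Point n) (g : Point n → ℝ) :
    ∑ u, oneBitNoise n p x u * g u = ∑ o, noiseWeight n p o * g (noisyPoint x o) := by
  have hflips : (univ.filter fun u => hammingDist x u = 1) = univ.image (flipBit x) := by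
    ext u
    simp only [mem_filter, mem_univ, true_and, hammingDist_eq_one_iff, mem_image]
    exact exists_congr fun i => eq_comm
  simp only [oneBitNoise, add_mul, sum_add_distrib, ite_mul, zero_mul, sum_ite_eq', mem_univ,
    if_true, ← sum_filter, hflips, sum_image fun i _ j _ h => flipBit_injective x h,
    Fintype.sum_option, noiseWeight, noisyPoint]

lemma accProb_oneBitNoise (p : ℝ) (f : Point n → ℝ) (x y : Point n) :
    accProb n (oneBitNoise n p) f x y =
      leMass (noiseWeight n p) (fun o => f (noisyPoint x o)) (fun o => f (noisyPoint y o)) := by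
  simp only [accProb, leMass, mul_assoc, ← mul_sum, sum_oneBitNoise_mul]

lemma accProb_oneBitNoise_LO_le {p : ℝ} (hn : 2 ≤ n) (hp0 : 0 ≤ p) (hp : p ≤ 1 / 2)
    {x y : Point n} (hLO : LO x < LO y) :
    accProb n (oneBitNoise n p) (fun z => (LO z : ℝ)) y x ≤
      accProb n (oneBitNoise n p) (fun z => (LO z : ℝ)) x y := by
  have hk : LO x < n := hLO.trans_le (LO_le y)
  simp only [accProb_oneBitNoise, leMass, Nat.cast_le]
  refine leMass_swap_le (w := noiseWeight n p) ?_ (a := fun o => LO (noisyPoint x o))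
    (b := fun o => LO (noisyPoint y o)) (s := some ⟨LO x, hk⟩) (e := none)
    (LO_lt_LO_flipBit rfl).le (LO_flipBit_of_lt hLO) ?_ (Option.some_ne_none _).symm rfl ?_
  · rintro (_ | _)
    · exact sub_nonneg.2 (hp.trans (by norm_num))
    · exact div_nonneg hp0 n.cast_nonneg
  · rintro (_ | i) hi
    · exact .inr ⟨rfl, hLO⟩
    · have hi : (i : ℕ) ≠ LO x := fun h => hi (congrArg some (Fin.ext h))
      rcases hi.lt_or_gt with hi | hi
      · exact .inl ⟨(LO_flipBit_of_lt (hi.trans hLO)).trans (LO_flipBit_of_lt hi).symm,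
          (LO_flipBit_of_lt hi).symm ▸ hi⟩
      · exact .inr ⟨LO_flipBit_of_gt hi, (lt_min hi hLO).trans_le (min_le_LO_flipBit y i)⟩
  · have hn' : (2 : ℝ) ≤ n := by exact_mod_cast hn
    rw [sum_noiseWeight (by omega), mul_one]
    simp only [noiseWeight]
    calc p / n ≤ p / 2 := div_le_div_of_nonneg_left hp0 two_pos hn'
      _ ≤ (1 - p) ^ 2 := by nlinarith

lemma step_le_step_of_accProb_le {mutK noise : Point n → Point n → ℝ} {f : Point n → ℝ}
    {x y : Point n} (hxy : x ≠ y) (hmut : mutK y x = mutK x y) (hmut0 : 0 ≤ mutK x y)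
    (hacc : accProb n noise f y x ≤ accProb n noise f x y) :
    step n mutK noise f y x ≤ step n mutK noise f x y := by
  simp only [step, if_neg hxy, if_neg hxy.symm, add_zero, hmut]
  exact mul_le_mul_of_nonneg_left hacc hmut0

lemma mutProb_comm (x y : Point n) : mutProb n y x = mutProb n x y := by
  simp only [mutProb, hammingDist_comm]

lemma mutProb_nonneg (x y : Point n) : 0 ≤ mutProb n x y := by
  unfold mutProb
  rcases n.eq_zero_or_pos with rfl | hn
  · simp
  · have : (1 : ℝ) / n ≤ 1 := div_le_one_of_le₀ (by exact_mod_cast hn) (Nat.cast_nonneg n)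
    exact mul_nonneg (by positivity) (pow_nonneg (by linarith) _)

end LeadingOnes

/-- **Lemma (transitions towards higher LeadingOnes values are at least as likely).**
For the (1+1) EA with one-bit prior noise probability `p ≤ 1/2` on LeadingOnes
with `n ≥ 2`: for all search points `x, y` with `LO(x) < LO(y)`, the one-generation
transition probability from `x` to `y` is at least that from `y` to `x`. -/
theorem stepEA_monotone (n : ℕ) (hn : 2 ≤ n) (p : ℝ) (hp0 : 0 ≤ p) (hp : p ≤ 1 / 2)
    (x y : Point n) (hLO : LO x < LO y) :
    stepEA n p y x ≤ stepEA n p x y :=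
  step_le_step_of_accProb_le (fun h => (h ▸ hLO).false) (mutProb_comm x y) (mutProb_nonneg x y)
    (accProb_oneBitNoise_LO_le hn hp0 hp hLO)
end

section
/- There exists a constant C > 0 such that for every n ≥ 1 and every real p with 0 ≤ p ≤ 1/2, the expected optimisation time of the (1+1) EA with one-bit prior noise probability p on LeadingOnes is at most 2^{C·n}. -/
open Finset ENNReal

/-!
From a point with `k` zero bits the EA can reach `1ⁿ` in `k` generations by flipping, in each
generation, exactly one of the remaining zero bits and accepting the offspring. With `j` zeros left
this happens with probability at least `j · e⁻¹/(4n)`: mutation flips exactly a prescribed bit with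
probability `(1/n)(1 - 1/n)ⁿ⁻¹ ≥ 1/(en)`, and with probability `(1 - p)² ≥ 1/4` noise touches neither
evaluation, in which case the offspring, whose LeadingOnes value is not smaller, is accepted. So every
block of `n` generations hits the optimum with probability at least `q = n! (e⁻¹/(4n))ⁿ ≥ 36⁻ⁿ`,
survival decays like `(1 - q)^⌊t/n⌋`, and the expected time is at most `2n/q ≤ 2^(8n)`.
-/

open Function Matrix Real
open scoped Nat

section Survival

variable {n : ℕ} {P : Point n → Point n → ℝ} {opt : Point n}

lemma survive_opt (t : ℕ) : survive n P opt t opt = 0 := by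
  cases t <;> simp [survive]

lemma survive_nonneg (hP : ∀ x y, 0 ≤ P x y) (t : ℕ) (x : Point n) :
    0 ≤ survive n P opt t x := by
  induction t generalizing x with
  | zero => simp only [survive]; split <;> norm_num
  | succ t ih =>
    simp only [survive]
    split
    · rfl
    · exact sum_nonneg fun y _ => mul_nonneg (hP x y) (ih y)

lemma survive_le_one (hP : P ∈ rowStochastic ℝ (Point n)) (t : ℕ) (x : Point n) :
    survive n P opt t x ≤ 1 := by
  induction t generalizing x with
  | zero => simp only [survive]; split <;> norm_num
  | succ t ih =>
    simp only [survive]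
    split
    · norm_num
    · calc ∑ y, P x y * survive n P opt t y ≤ ∑ y, P x y * 1 :=
            sum_le_sum fun y _ => mul_le_mul_of_nonneg_left (ih y) (nonneg_of_mem_rowStochastic hP)
        _ = 1 := by simp [sum_row_of_mem_rowStochastic hP]

lemma survive_antitone (hP : P ∈ rowStochastic ℝ (Point n)) (x : Point n) :
    Antitone fun t => survive n P opt t x := by
  refine antitone_nat_of_succ_le fun t => ?_
  induction t generalizing x with
  | zero =>
    by_cases hx : x = opt
    · simp [hx, survive_opt]
    · exact (survive_le_one hP 1 x).trans_eq (if_neg hx).symm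
  | succ t ih =>
    simp only [survive] at ih ⊢
    split
    · rfl
    · exact sum_le_sum fun y _ => mul_le_mul_of_nonneg_left (ih y) (nonneg_of_mem_rowStochastic hP)

lemma survive_add_le (hP : ∀ x y, 0 ≤ P x y) {s : ℕ} {M : ℝ}
    (hM : ∀ y, survive n P opt s y ≤ M) (t : ℕ) (x : Point n) :
    survive n P opt (t + s) x ≤ M * survive n P opt t x := by
  induction t generalizing x with
  | zero =>
    by_cases hx : x = opt
    · simp [hx, survive_opt]
    · simpa [survive, hx] using hM x
  | succ t ih =>
    rw [Nat.add_right_comm]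
    simp only [survive]
    split
    · simp
    · rw [mul_sum]
      exact sum_le_sum fun y _ => (mul_le_mul_of_nonneg_left (ih y) (hP x y)).trans_eq
        (mul_left_comm _ _ _)

lemma survive_le_pow_div (hP : P ∈ rowStochastic ℝ (Point n)) {s : ℕ} {r : ℝ}
    (hs : ∀ y, survive n P opt s y ≤ r) (t : ℕ) (x : Point n) :
    survive n P opt t x ≤ r ^ (t / s) := by
  have hP0 : ∀ x y, 0 ≤ P x y := (mem_rowStochastic_iff_sum.1 hP).1
  have hr : 0 ≤ r := (survive_nonneg hP0 s opt).trans (hs opt)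
  have hblocks : ∀ j y, survive n P opt (j * s) y ≤ r ^ j := by
    intro j
    induction j with
    | zero => simpa using survive_le_one hP 0
    | succ j ih =>
      intro y
      calc survive n P opt ((j + 1) * s) y = survive n P opt (j * s + s) y := by rw [add_one_mul]
        _ ≤ r * survive n P opt (j * s) y := survive_add_le hP0 hs _ y
        _ ≤ r * r ^ j := mul_le_mul_of_nonneg_left (ih y) hr
        _ = r ^ (j + 1) := by ring
  exact (survive_antitone hP x (Nat.div_mul_le_self t s)).trans (hblocks _ x)

end Survival

lemma ENNReal.tsum_pow_div (r : ℝ≥0∞) {s : ℕ} (hs : s ≠ 0) :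
    ∑' t : ℕ, r ^ (t / s) = s * (1 - r)⁻¹ := by
  have : NeZero s := ⟨hs⟩
  calc ∑' t : ℕ, r ^ (t / s) = ∑' b : ℕ × Fin s, r ^ b.1 :=
        (Nat.divModEquiv s).tsum_eq fun b => r ^ b.1
    _ = ∑' j : ℕ, s * r ^ j := by
        rw [ENNReal.tsum_prod (f := fun j (_ : Fin s) => r ^ j)]
        simp [tsum_fintype]
    _ = s * (1 - r)⁻¹ := by rw [ENNReal.tsum_mul_left, ENNReal.tsum_geometric]

lemma expectedTime_le_of_survive_le {n : ℕ} {P : Point n → Point n → ℝ} {opt : Point n}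
    (hP : P ∈ rowStochastic ℝ (Point n)) {s : ℕ} (hs : s ≠ 0) {q : ℝ} (hq : 0 < q)
    (hsurv : ∀ x, survive n P opt s x ≤ 1 - q) (e : ℕ) :
    expectedTime n P opt e ≤ ENNReal.ofReal (e * s / q) := by
  have hq1 : 0 ≤ 1 - q :=
    (survive_nonneg ((mem_rowStochastic_iff_sum.1 hP).1) s opt).trans (hsurv opt)
  have hterm : ∀ t : ℕ, ENNReal.ofReal ((Fintype.card (Point n) : ℝ)⁻¹ *
      ∑ x, survive n P opt t x) ≤ ENNReal.ofReal (1 - q) ^ (t / s) := by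
    intro t
    rw [← ENNReal.ofReal_pow hq1]
    refine ENNReal.ofReal_le_ofReal ?_
    rw [inv_mul_le_iff₀ (by positivity)]
    simpa using sum_le_card_nsmul univ _ _ fun x _ => survive_le_pow_div hP hsurv t x
  have hgap : 1 - ENNReal.ofReal (1 - q) = ENNReal.ofReal q := by
    rw [← ENNReal.ofReal_one, ← ENNReal.ofReal_sub _ hq1, _root_.sub_sub_cancel]
  calc expectedTime n P opt e ≤ e * ∑' t : ℕ, ENNReal.ofReal (1 - q) ^ (t / s) :=
        mul_le_mul_right (ENNReal.tsum_le_tsum hterm) _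
    _ = ENNReal.ofReal (e * s / q) := by
        rw [ENNReal.tsum_pow_div _ hs, hgap, ← ENNReal.ofReal_inv_of_pos hq, div_eq_mul_inv,
          ENNReal.ofReal_mul (by positivity), ENNReal.ofReal_mul (by positivity),
          ENNReal.ofReal_natCast, ENNReal.ofReal_natCast, mul_assoc]

section Acceptance

variable {n : ℕ} {noise : Point n → Point n → ℝ} {f : Point n → ℝ}

lemma accProb_nonneg (hnoise : ∀ x u, 0 ≤ noise x u) (x y : Point n) :
    0 ≤ accProb n noise f x y :=
  sum_nonneg fun u _ => sum_nonneg fun v _ => by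
    have := hnoise x u; have := hnoise y v; positivity

lemma accProb_le_one (hnoise : noise ∈ rowStochastic ℝ (Point n)) (x y : Point n) :
    accProb n noise f x y ≤ 1 :=
  calc accProb n noise f x y ≤ ∑ u, ∑ v, noise x u * noise y v := by
        refine sum_le_sum fun u _ => sum_le_sum fun v _ => ?_
        have := nonneg_of_mem_rowStochastic hnoise (i := x) (j := u)
        have := nonneg_of_mem_rowStochastic hnoise (i := y) (j := v)
        split_ifs <;> nlinarith
    _ = 1 := by
        rw [← sum_mul_sum, sum_row_of_mem_rowStochastic hnoise, sum_row_of_mem_rowStochastic hnoise,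
          mul_one]

/-- With probability at least `noise x x * noise y y` both evaluations are undisturbed. -/
lemma mul_le_accProb (hnoise : ∀ x u, 0 ≤ noise x u) {x y : Point n} (hxy : f x ≤ f y) :
    noise x x * noise y y ≤ accProb n noise f x y := by
  have hterm : ∀ u v, 0 ≤ noise x u * noise y v * if f u ≤ f v then 1 else 0 := fun u v => by
    have := hnoise x u; have := hnoise y v; positivity
  calc noise x x * noise y y = noise x x * noise y y * if f x ≤ f y then 1 else 0 := by
        rw [if_pos hxy, mul_one]
    _ ≤ ∑ v, noise x x * noise y v * if f x ≤ f v then 1 else 0 :=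
        single_le_sum (fun v _ => hterm x v) (mem_univ y)
    _ ≤ accProb n noise f x y :=
        single_le_sum (f := fun u => ∑ v, noise x u * noise y v * if f u ≤ f v then 1 else 0)
          (fun u _ => sum_nonneg fun v _ => hterm u v) (mem_univ x)

lemma step_mem_rowStochastic {mutK : Point n → Point n → ℝ}
    (hmut : mutK ∈ rowStochastic ℝ (Point n)) (hnoise : noise ∈ rowStochastic ℝ (Point n)) :
    step n mutK noise f ∈ rowStochastic ℝ (Point n) := by
  have hmut0 : ∀ x y, 0 ≤ mutK x y := (mem_rowStochastic_iff_sum.1 hmut).1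
  have hacc0 := accProb_nonneg (f := f) (mem_rowStochastic_iff_sum.1 hnoise).1
  have hacc1 := accProb_le_one (f := f) hnoise
  refine mem_rowStochastic_iff_sum.2 ⟨fun x z => ?_, fun x => ?_⟩
  · refine add_nonneg (mul_nonneg (hmut0 x z) (hacc0 x z)) ?_
    split_ifs
    · exact sum_nonneg fun y _ => mul_nonneg (hmut0 x y) (sub_nonneg.2 (hacc1 x y))
    · rfl
  · simp only [step]
    rw [sum_add_distrib, sum_ite_eq' univ x, if_pos (mem_univ x), ← sum_add_distrib]
    exact (sum_congr rfl fun y _ => by ring).trans (sum_row_of_mem_rowStochastic hmut x)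

end Acceptance

lemma hammingDist_update_of_ne {ι β : Type*} [Fintype ι] [DecidableEq ι] [DecidableEq β]
    (x : ι → β) {i : ι} {b : β} (hb : b ≠ x i) : hammingDist x (update x i b) = 1 := by
  refine card_eq_one.2 ⟨i, ?_⟩
  ext j
  by_cases hj : j = i
  · subst hj; simpa using hb.symm
  · simp [hj]

section Kernels

variable {n : ℕ}

lemma card_hammingDist_eq_one (x : Point n) : #{u | hammingDist x u = 1} = n := by
  have hsphere : ({u | hammingDist x u = 1} : Finset (Point n)) =
      univ.image fun i => update x i (!x i) := by
    ext u
    simp only [mem_filter, mem_univ, true_and, mem_image]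
    constructor
    · intro hu
      obtain ⟨i, hi⟩ := card_eq_one.1 hu
      refine ⟨i, funext fun j => ?_⟩
      have hj : x j ≠ u j ↔ j = i := by simpa using congrArg (j ∈ ·) hi
      by_cases hji : j = i
      · subst hji; cases hx : x j <;> cases hu : u j <;> simp_all
      · simpa [hji] using not_not.1 (mt hj.1 hji)
    · rintro ⟨i, rfl⟩
      exact hammingDist_update_of_ne x (Bool.not_ne_self _)
  rw [hsphere, card_image_of_injective, card_univ, Fintype.card_fin]
  intro i j hij
  by_contra hne
  simpa [update_of_ne hne] using congrFun hij i

lemma mutProb_eq_prod (x z : Point n) :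
    mutProb n x z = ∏ i, if x i = z i then 1 - 1 / (n : ℝ) else 1 / n := by
  have hcard : n - hammingDist x z = #{i | x i = z i} := by
    have := card_filter_add_card_filter_not (s := univ) fun i => x i = z i
    simp only [card_univ, Fintype.card_fin] at this
    have hdist : hammingDist x z = #{i | ¬x i = z i} := rfl
    omega
  rw [prod_ite, prod_const, prod_const, mutProb, mul_comm, hcard]
  rfl

lemma mutProb_mem_rowStochastic (hn : 1 ≤ n) : mutProb n ∈ rowStochastic ℝ (Point n) := by
  have hrate : 1 / (n : ℝ) ≤ 1 := div_le_one_of_le₀ (by exact_mod_cast hn) n.cast_nonneg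
  refine mem_rowStochastic_iff_sum.2 ⟨fun x z => ?_, fun x => ?_⟩
  · have : 0 ≤ 1 - 1 / (n : ℝ) := sub_nonneg.2 hrate
    rw [mutProb]; positivity
  · simp only [mutProb_eq_prod]
    rw [← Fintype.prod_sum fun i b => if x i = b then 1 - 1 / (n : ℝ) else 1 / n]
    refine prod_eq_one fun i _ => ?_
    cases x i <;> simp

lemma oneBitNoise_self (p : ℝ) (x : Point n) : oneBitNoise n p x x = 1 - p := by
  simp [oneBitNoise]

lemma oneBitNoise_mem_rowStochastic (hn : 1 ≤ n) {p : ℝ} (hp0 : 0 ≤ p) (hp1 : p ≤ 1) :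
    oneBitNoise n p ∈ rowStochastic ℝ (Point n) := by
  refine mem_rowStochastic_iff_sum.2 ⟨fun x u => ?_, fun x => ?_⟩
  · have : 0 ≤ 1 - p := sub_nonneg.2 hp1
    rw [oneBitNoise]; positivity
  · have : (n : ℝ) ≠ 0 := by positivity
    simp [oneBitNoise, sum_add_distrib, ← sum_filter, card_hammingDist_eq_one]
    field_simp
    ring

lemma stepEA_mem_rowStochastic (hn : 1 ≤ n) {p : ℝ} (hp0 : 0 ≤ p) (hp1 : p ≤ 1) :
    stepEA n p ∈ rowStochastic ℝ (Point n) :=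
  step_mem_rowStochastic (mutProb_mem_rowStochastic hn) (oneBitNoise_mem_rowStochastic hn hp0 hp1)

end Kernels

lemma sum_mul_le_one_sub_mul_sum {α : Type*} [Fintype α] {w s : α → ℝ} (hw0 : ∀ y, 0 ≤ w y)
    (hw1 : ∑ y, w y = 1) {Y : Finset α} {c : ℝ} (hs : ∀ y, s y ≤ 1) (hsY : ∀ y ∈ Y, s y ≤ 1 - c) :
    ∑ y, w y * s y ≤ 1 - c * ∑ y ∈ Y, w y := by
  classical
  calc ∑ y, w y * s y ≤ ∑ y, w y * (1 - if y ∈ Y then c else 0) := by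
        refine sum_le_sum fun y _ => mul_le_mul_of_nonneg_left ?_ (hw0 y)
        split_ifs with hy
        · exact hsY y hy
        · simpa using hs y
    _ = 1 - c * ∑ y ∈ Y, w y := by
        simp [mul_sub, sum_sub_distrib, hw1, mul_sum, mul_comm]

section Zeros

variable {n : ℕ}

lemma LO_mono : Monotone (LO : Point n → ℕ) := by
  intro x y hxy
  refine card_le_card fun i => ?_
  simp only [mem_filter, mem_univ, true_and]
  exact fun hx j hj => top_le_iff.1 ((hx j hj).symm.trans_le (hxy j))

def zeros (x : Point n) : Finset (Fin n) := {i | x i = false}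

lemma zeros_eq_empty_iff {x : Point n} : zeros x = ∅ ↔ x = allOnes n := by
  simp [zeros, filter_eq_empty_iff, funext_iff, allOnes]

lemma zeros_update_true (x : Point n) (i : Fin n) :
    zeros (update x i true) = (zeros x).erase i := by
  ext j
  by_cases hj : j = i <;> simp [zeros, hj]

lemma update_true_injOn_zeros (x : Point n) :
    Set.InjOn (fun i => update x i true) (zeros x) := by
  intro i hi j _ hij
  by_contra hne
  simpa [update_of_ne hne, show x i = false by simpa [zeros] using hi] using congrFun hij i

/-- With `j` zero bits left, some single zero bit is flipped and accepted with probability at least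
`j * β`; chaining these `k` steps gives `k! * β ^ k`. -/
theorem survive_card_zeros_le {P : Point n → Point n → ℝ} (hP : P ∈ rowStochastic ℝ (Point n))
    {β : ℝ} (hβ : 0 ≤ β) (hflip : ∀ x i, x i = false → β ≤ P x (update x i true)) (x : Point n) :
    survive n P (allOnes n) #(zeros x) x ≤ 1 - (#(zeros x))! * β ^ #(zeros x) := by
  obtain ⟨hP0, hP1⟩ := mem_rowStochastic_iff_sum.1 hP
  generalize hk : #(zeros x) = k
  induction k generalizing x with
  | zero => simp [zeros_eq_empty_iff.1 (card_eq_zero.1 hk), survive_opt]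
  | succ k ih =>
    have hx : x ≠ allOnes n := fun h => by simp [zeros_eq_empty_iff.2 h] at hk
    set Y := (zeros x).image fun i => update x i true
    have hY : ∀ y ∈ Y, survive n P (allOnes n) k y ≤ 1 - k ! * β ^ k := by
      simp only [Y, mem_image]
      rintro _ ⟨i, hi, rfl⟩
      exact ih _ (by rw [zeros_update_true, card_erase_of_mem hi, hk, Nat.add_sub_cancel])
    have hmass : (k + 1) * β ≤ ∑ y ∈ Y, P x y := by
      rw [sum_image (update_true_injOn_zeros x)]
      simpa [hk] using card_nsmul_le_sum (zeros x) (fun i => P x (update x i true)) β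
        fun i hi => hflip x i (by simpa [zeros] using hi)
    simp only [survive, if_neg hx]
    calc ∑ y, P x y * survive n P (allOnes n) k y ≤ 1 - k ! * β ^ k * ∑ y ∈ Y, P x y :=
          sum_mul_le_one_sub_mul_sum (hP0 x) (hP1 x) (survive_le_one hP k) hY
      _ ≤ 1 - k ! * β ^ k * ((k + 1) * β) := by gcongr
      _ = 1 - (k + 1)! * β ^ (k + 1) := by push_cast [Nat.factorial_succ]; ring

end Zeros

lemma factorial_mul_pow_le_of_le {β : ℝ} (hβ : 0 ≤ β) {k m : ℕ} (hkm : k ≤ m) (hmβ : m * β ≤ 1) :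
    m ! * β ^ m ≤ k ! * β ^ k := by
  induction m, hkm using Nat.le_induction with
  | base => rfl
  | succ m _ ih =>
    have hstep : (m + 1) * β ≤ 1 := by exact_mod_cast hmβ
    calc ((m + 1)! : ℝ) * β ^ (m + 1) = m ! * β ^ m * ((m + 1) * β) := by
          push_cast [Nat.factorial_succ]; ring
      _ ≤ m ! * β ^ m := mul_le_of_le_one_right (by positivity) hstep
      _ ≤ k ! * β ^ k := ih (le_trans (by gcongr; linarith) hstep)

theorem survive_le_one_sub_factorial_mul_pow {n : ℕ} {P : Point n → Point n → ℝ}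
    (hP : P ∈ rowStochastic ℝ (Point n)) {β : ℝ} (hβ : 0 ≤ β) (hnβ : n * β ≤ 1)
    (hflip : ∀ x i, x i = false → β ≤ P x (update x i true)) (x : Point n) :
    survive n P (allOnes n) n x ≤ 1 - n ! * β ^ n := by
  have hk : #(zeros x) ≤ n := (card_le_univ _).trans_eq (Fintype.card_fin n)
  calc survive n P (allOnes n) n x ≤ survive n P (allOnes n) #(zeros x) x :=
        survive_antitone hP x hk
    _ ≤ 1 - (#(zeros x))! * β ^ #(zeros x) := survive_card_zeros_le hP hβ hflip x
    _ ≤ 1 - n ! * β ^ n := by gcongr 1 - ?_; exact factorial_mul_pow_le_of_le hβ hk hnβ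

lemma exp_neg_one_le_one_sub_inv_pow_pred (n : ℕ) : exp (-1) ≤ (1 - 1 / (n : ℝ)) ^ (n - 1) := by
  rcases Nat.lt_or_ge n 2 with hn | hn
  · interval_cases n <;> simp [exp_le_one_iff]
  obtain ⟨m, rfl⟩ : ∃ m, n = m + 1 := ⟨n - 1, by omega⟩
  have hm : (m : ℝ) ≠ 0 := by norm_cast; omega
  have hbase : 1 - 1 / ((m + 1 : ℕ) : ℝ) = (1 + (m : ℝ)⁻¹)⁻¹ := by
    push_cast; field_simp; ring
  rw [Nat.add_sub_cancel, hbase, inv_pow, Real.exp_neg]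
  exact inv_anti₀ (by positivity) one_add_inv_pow_le_exp

lemma stepEA_update_true_ge {n : ℕ} {p : ℝ} (hp0 : 0 ≤ p) (hp2 : p ≤ 1 / 2) {x : Point n}
    {i : Fin n} (hi : x i = false) : exp (-1) / (4 * n) ≤ stepEA n p x (update x i true) := by
  have hne : update x i true ≠ x := fun h => by simpa [hi] using congrFun h i
  have hmut : mutProb n x (update x i true) = 1 / n * (1 - 1 / (n : ℝ)) ^ (n - 1) := by
    rw [mutProb, hammingDist_update_of_ne x (by simp [hi]), pow_one]
  have hacc : (1 - p) * (1 - p) ≤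
      accProb n (oneBitNoise n p) (fun z => (LO z : ℝ)) x (update x i true) := by
    have hnoise := (mem_rowStochastic_iff_sum.1 (oneBitNoise_mem_rowStochastic (n := n)
      (Fin.pos i) hp0 (by linarith))).1
    simpa only [oneBitNoise_self] using mul_le_accProb hnoise
      (by exact_mod_cast LO_mono (le_update_iff.2 ⟨le_top, fun _ _ => le_rfl⟩))
  have hlow := exp_neg_one_le_one_sub_inv_pow_pred n
  have hpow : 0 ≤ (1 - 1 / (n : ℝ)) ^ (n - 1) := (exp_pos _).le.trans hlow
  simp only [stepEA, step, if_neg hne, add_zero, hmut]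
  calc exp (-1) / (4 * n) = 1 / n * exp (-1) * (1 / 4) := by ring
    _ ≤ 1 / n * (1 - 1 / (n : ℝ)) ^ (n - 1) * ((1 - p) * (1 - p)) :=
        mul_le_mul (by gcongr) (by nlinarith) (by norm_num) (by positivity)
    _ ≤ _ := by gcongr

lemma inv_thirtySix_pow_le_factorial_mul_pow (n : ℕ) :
    (36 : ℝ)⁻¹ ^ n ≤ n ! * (exp (-1) / (4 * n)) ^ n := by
  rcases n.eq_zero_or_pos with rfl | hn
  · simp
  have hn' : (n : ℝ) ≠ 0 := by positivity
  have hfact : exp (-1) ^ n * n ^ n ≤ n ! := by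
    have h := pow_div_factorial_le_exp (n : ℝ) n.cast_nonneg n
    rw [div_le_iff₀ (by positivity)] at h
    rw [← Real.exp_nat_mul, mul_neg_one, Real.exp_neg, inv_mul_le_iff₀ (exp_pos _)]
    exact h
  have hthird : (3 : ℝ)⁻¹ ≤ exp (-1) := by
    rw [Real.exp_neg]
    exact inv_anti₀ (exp_pos 1) (exp_one_lt_d9.le.trans (by norm_num))
  calc (36 : ℝ)⁻¹ ^ n ≤ (exp (-1) * (exp (-1) / 4)) ^ n := by gcongr; nlinarith
    _ = exp (-1) ^ n * n ^ n * (exp (-1) / (4 * n)) ^ n := by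
        rw [← mul_pow, ← mul_pow]; congr 1; field_simp
    _ ≤ n ! * (exp (-1) / (4 * n)) ^ n := by gcongr

lemma two_mul_mul_thirtySix_pow_le (n : ℕ) : 2 * n * 36 ^ n ≤ 2 ^ (8 * n) := by
  have hlin : 2 * n ≤ 4 ^ n :=
    calc 2 * n ≤ (n + 1) ^ 2 := by nlinarith
      _ ≤ (2 ^ n) ^ 2 := Nat.pow_le_pow_left Nat.lt_two_pow_self 2
      _ = 4 ^ n := by rw [← pow_mul, mul_comm, pow_mul]; norm_num
  calc 2 * n * 36 ^ n ≤ 4 ^ n * 64 ^ n := Nat.mul_le_mul hlin (Nat.pow_le_pow_left (by norm_num) n)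
    _ = 2 ^ (8 * n) := by rw [← mul_pow, pow_mul]; norm_num

/-- **Theorem (exponential upper bound for large noise).**
There exists a constant `C > 0` such that for every `n ≥ 1` and every
`0 ≤ p ≤ 1/2`, the expected optimisation time of the (1+1) EA with one-bit
prior noise probability `p` on LeadingOnes is at most `2^(C·n)`. -/
theorem EA_LeadingOnes_noise_exponential_upper_bound :
    ∃ C : ℝ, 0 < C ∧
      ∀ n : ℕ, 1 ≤ n → ∀ p : ℝ, 0 ≤ p → p ≤ 1 / 2 →
        EAtime n p ≤ ENNReal.ofReal ((2 : ℝ) ^ (C * n)) := by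
  refine ⟨8, by norm_num, fun n hn p hp0 hp2 => ?_⟩
  set β : ℝ := exp (-1) / (4 * n)
  have hnβ : n * β ≤ 1 := by
    have : (n : ℝ) ≠ 0 := by positivity
    calc n * β = exp (-1) / 4 := by simp only [β]; field_simp
      _ ≤ 1 := by linarith [exp_le_one_iff.2 (show (-1 : ℝ) ≤ 0 by norm_num)]
  have hq : (36 : ℝ)⁻¹ ^ n ≤ n ! * β ^ n := inv_thirtySix_pow_le_factorial_mul_pow n
  have hP := stepEA_mem_rowStochastic hn hp0 (by linarith)
  have hsurv := survive_le_one_sub_factorial_mul_pow hP (by positivity) hnβ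
    fun x i hi => stepEA_update_true_ge hp0 hp2 hi
  calc EAtime n p ≤ ENNReal.ofReal (2 * n / (n ! * β ^ n)) :=
        (expectedTime_le_of_survive_le hP (by omega) (hq.trans_lt' (by positivity)) hsurv 2).trans_eq
          (by norm_num)
    _ ≤ ENNReal.ofReal ((2 : ℝ) ^ ((8 : ℝ) * n)) := by
        refine ENNReal.ofReal_le_ofReal ?_
        calc 2 * n / (n ! * β ^ n) ≤ 2 * n / (36 : ℝ)⁻¹ ^ n := by gcongr
          _ = ((2 * n * 36 ^ n : ℕ) : ℝ) := by push_cast; rw [inv_pow, div_inv_eq_mul]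
          _ ≤ ((2 ^ (8 * n) : ℕ) : ℝ) := by exact_mod_cast two_mul_mul_thirtySix_pow_le n
          _ = (2 : ℝ) ^ ((8 : ℝ) * n) := by push_cast; rw [← Real.rpow_natCast]; push_cast; rfl
end
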